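/- Fix 0<r<1, ρ>0, ϑ>0 and c>0, and let m(n) ∼ cn. Let (a_k)_{k≥0} be a bounded nonnegative sequence with (1/m)·Σ_{k=0}^m a_k → L as m→∞, and let H(k) be increasing in k and regularly varying at ∞ with index ρ. Then (1+ρ)/(m·H(m)) · Σ_{k=0}^{m(n)} H(k)·a_k → L as n→∞. -/

import Mathlib

/-!
Write `a k = L + b k`; Cesàro convergence says that the partial sums `B M` of `b` are `o(M)`.
The `L`-part is Karamata's theorem `∑_{k ≤ M} H k ∼ M H(M) / (1 + ρ)`: after the substitution
`t = M s`, `∑_{k < M} H k / (M H(M)) = ∫₀¹ H⌊M s⌋ / H(M) ds`, whose integrand is bounded by `1`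
(monotonicity) and tends to `s ^ ρ` (regular variation), so dominated convergence applies.
The `b`-part is `o(M H(M))` by Abel summation: `|∑_{k ≤ M} H k b k| ≤ 2 H(M) max_{k ≤ M} |B k|`.
-/

open Filter Set Topology MeasureTheory Finset

lemma intervalIntegral_comp_floor_succ (H : ℕ → ℝ) (n : ℕ) :
    ∫ t in (n : ℝ)..n + 1, H ⌊t⌋₊ = H n := by
  rw [intervalIntegral.integral_of_le (by linarith), integral_Ioc_eq_integral_Ioo,
    ← integral_Ico_eq_integral_Ioo, setIntegral_congr_fun measurableSet_Ico
      (g := fun _ => H n) (fun t ht => by simp only [Nat.floor_eq_on_Ico n t ht])]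
  simp

lemma intervalIntegral_comp_floor {H : ℕ → ℝ} (hH : Monotone H) (n : ℕ) :
    ∫ t in (0 : ℝ)..n, H ⌊t⌋₊ = ∑ k ∈ range n, H k := by
  have hint : ∀ k < n, IntervalIntegrable (fun t : ℝ => H ⌊t⌋₊) volume k (k + 1 : ℕ) :=
    fun _ _ => (hH.comp Nat.floor_mono).intervalIntegrable
  simpa [intervalIntegral_comp_floor_succ] using
    (intervalIntegral.sum_integral_adjacent_intervals hint).symm

lemma sum_range_div_eq_integral {H : ℕ → ℝ} (hH : Monotone H) {n : ℕ} (hn : n ≠ 0) :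
    (∑ k ∈ range n, H k) / (n * H n) = ∫ s in Ioc (0 : ℝ) 1, H ⌊n * s⌋₊ / H n := by
  rw [integral_div, ← intervalIntegral.integral_of_le zero_le_one,
    intervalIntegral.integral_comp_mul_left (fun t => H ⌊t⌋₊) (Nat.cast_ne_zero.2 hn),
    mul_zero, mul_one, intervalIntegral_comp_floor hH, smul_eq_mul, inv_mul_eq_div, div_div]

def IsRegularlyVarying (H : ℕ → ℝ) (ρ : ℝ) : Prop :=
  ∀ l : ℝ, 0 < l → Tendsto (fun n : ℕ => H ⌊l * n⌋₊ / H n) atTop (𝓝 (l ^ ρ))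

namespace IsRegularlyVarying

variable {H : ℕ → ℝ} {ρ : ℝ}

lemma eventually_ne_zero (hH : IsRegularlyVarying H ρ) : ∀ᶠ n in atTop, H n ≠ 0 := by
  have h := hH 1 one_pos
  simp only [one_mul, Nat.floor_natCast, Real.one_rpow] at h
  filter_upwards [h.eventually_ne one_ne_zero] with n hn h0
  simp [h0] at hn

lemma tendsto_sum_range_div (hH : IsRegularlyVarying H ρ) (hρ : 0 ≤ ρ) (hmono : Monotone H)
    (hnn : ∀ k, 0 ≤ H k) :
    Tendsto (fun n : ℕ => (∑ k ∈ range n, H k) / (n * H n)) atTop (𝓝 (1 + ρ)⁻¹) := by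
  have hlim : ∫ s in Ioc (0 : ℝ) 1, s ^ ρ = (1 + ρ)⁻¹ := by
    rw [← intervalIntegral.integral_of_le zero_le_one, integral_rpow (by left; linarith),
      Real.one_rpow, Real.zero_rpow (by linarith), add_comm]
    simp
  rw [← hlim]
  refine (tendsto_integral_filter_of_dominated_convergence (fun _ => 1) ?_ ?_
    (integrableOn_const measure_Ioc_lt_top.ne) ?_).congr'
    ((eventually_ne_atTop 0).mono fun n hn => (sum_range_div_eq_integral hmono hn).symm)
  · exact .of_forall fun n => (((measurable_from_top.comp Nat.measurable_floor).comp
      (measurable_const_mul _)).div_const _).aestronglyMeasurable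
  · refine .of_forall fun n => (ae_restrict_mem measurableSet_Ioc).mono fun s hs => ?_
    have hfloor : ⌊(n : ℝ) * s⌋₊ ≤ n :=
      Nat.floor_le_of_le (mul_le_of_le_one_right n.cast_nonneg hs.2)
    rw [Real.norm_of_nonneg (div_nonneg (hnn _) (hnn _))]
    exact div_le_one_of_le₀ (hmono hfloor) (hnn n)
  · exact (ae_restrict_mem measurableSet_Ioc).mono fun s hs =>
      by simpa only [mul_comm s] using hH s hs.1

lemma tendsto_sum_range_succ_div (hH : IsRegularlyVarying H ρ) (hρ : 0 ≤ ρ) (hmono : Monotone H)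
    (hnn : ∀ k, 0 ≤ H k) :
    Tendsto (fun n : ℕ => (∑ k ∈ range (n + 1), H k) / (n * H n)) atTop (𝓝 (1 + ρ)⁻¹) := by
  have h := (hH.tendsto_sum_range_div hρ hmono hnn).add tendsto_inv_atTop_nhds_zero_nat
  rw [add_zero] at h
  refine h.congr' ?_
  filter_upwards [hH.eventually_ne_zero, eventually_ne_atTop 0] with n hHn hn
  have : (n : ℝ) ≠ 0 := Nat.cast_ne_zero.2 hn
  rw [sum_range_succ]
  field_simp

end IsRegularlyVarying

lemma abs_sum_range_mul_le_of_abs_partialSum_le {H b : ℕ → ℝ} (hmono : Monotone H)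
    (hH0 : 0 ≤ H 0) {M : ℕ} {β : ℝ} (hB : ∀ k ≤ M, |∑ j ∈ range (k + 1), b j| ≤ β) :
    |∑ k ∈ range (M + 1), H k * b k| ≤ 2 * H M * β := by
  have hΔ : ∀ k, 0 ≤ H (k + 1) - H k := fun k => sub_nonneg.2 (hmono k.le_succ)
  have hβ : 0 ≤ β := (abs_nonneg _).trans (hB 0 M.zero_le)
  have h := sum_range_by_parts H b (M + 1)
  simp only [smul_eq_mul, Nat.add_sub_cancel] at h
  rw [h]
  calc _ ≤ |H M * ∑ j ∈ range (M + 1), b j|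
        + ∑ k ∈ range M, |(H (k + 1) - H k) * ∑ j ∈ range (k + 1), b j| :=
        (abs_sub _ _).trans (add_le_add_right (abs_sum_le_sum_abs _ _) _)
    _ ≤ H M * β + ∑ k ∈ range M, (H (k + 1) - H k) * β := by
        have hHM : 0 ≤ H M := hH0.trans (hmono M.zero_le)
        simp only [abs_mul, abs_of_nonneg hHM, abs_of_nonneg (hΔ _)]
        gcongr with k hk
        · exact hB M le_rfl
        · exact hΔ k
        · exact hB k (mem_range.1 hk).le
    _ = (2 * H M - H 0) * β := by rw [← sum_mul, sum_range_sub]; ring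
    _ ≤ 2 * H M * β := by nlinarith

lemma exists_abs_le_mul_add_of_tendsto_div {u : ℕ → ℝ}
    (hu : Tendsto (fun k : ℕ => u k / k) atTop (𝓝 0)) {ε : ℝ} (hε : 0 < ε) :
    ∃ C, ∀ k, |u k| ≤ ε * k + C := by
  obtain ⟨N, hN⟩ := Metric.tendsto_atTop.1 hu ε hε
  refine ⟨∑ j ∈ range (N + 1), |u j|, fun k => ?_⟩
  rcases le_or_gt k N with hk | hk
  · have := single_le_sum (fun j _ => abs_nonneg (u j)) (mem_range.2 (Nat.lt_succ_of_le hk))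
    have : 0 ≤ ε * k := by positivity
    linarith
  · have hk0 : (0 : ℝ) < k := by exact_mod_cast (N.zero_le.trans_lt hk)
    have := hN k hk.le
    rw [Real.dist_0_eq_abs, abs_div, Nat.abs_cast, div_lt_iff₀ hk0] at this
    have := sum_nonneg fun j (_ : j ∈ range (N + 1)) => abs_nonneg (u j)
    linarith

lemma tendsto_sum_range_mul_div_of_tendsto_partialSum_div {H b : ℕ → ℝ} (hmono : Monotone H)
    (hH0 : 0 ≤ H 0) (hb : Tendsto (fun M : ℕ => (∑ k ∈ range (M + 1), b k) / M) atTop (𝓝 0)) :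
    Tendsto (fun M : ℕ => (∑ k ∈ range (M + 1), H k * b k) / (M * H M)) atTop (𝓝 0) := by
  rw [Metric.tendsto_nhds]
  intro ε hε
  obtain ⟨C, hC⟩ := exists_abs_le_mul_add_of_tendsto_div hb (ε := ε / 4) (by positivity)
  have hCM : Tendsto (fun M : ℕ => 2 * C / M) atTop (𝓝 0) :=
    tendsto_const_div_atTop_nhds_zero_nat _
  filter_upwards [hCM.eventually (gt_mem_nhds (half_pos hε)), eventually_gt_atTop 0]
    with M hM hM0
  have hbound := abs_sum_range_mul_le_of_abs_partialSum_le hmono hH0 (M := M)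
    (β := ε / 4 * M + C) fun k hk => (hC k).trans (by gcongr)
  have hHM : 0 ≤ H M := hH0.trans (hmono M.zero_le)
  have hM0' : (0 : ℝ) < M := by exact_mod_cast hM0
  rw [Real.dist_0_eq_abs, abs_div, abs_of_nonneg (a := (M : ℝ) * H M) (by positivity)]
  rcases hHM.eq_or_lt with h | h
  · rw [← h, mul_zero, div_zero]
    exact hε
  · rw [div_lt_iff₀ (by positivity)]
    calc _ ≤ 2 * H M * (ε / 4 * M + C) := hbound
      _ = (ε / 2 + 2 * C / M) * (M * H M) := by field_simp; ring
      _ < ε * (M * H M) := by gcongr; linarith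

theorem IsRegularlyVarying.tendsto_weighted_cesaro {H a : ℕ → ℝ} {ρ L : ℝ}
    (hH : IsRegularlyVarying H ρ) (hρ : 0 ≤ ρ) (hmono : Monotone H) (hnn : ∀ k, 0 ≤ H k)
    (ha : Tendsto (fun M : ℕ => (1 / (M : ℝ)) * ∑ k ∈ range (M + 1), a k) atTop (𝓝 L)) :
    Tendsto (fun M : ℕ => (1 + ρ) / (M * H M) * ∑ k ∈ range (M + 1), H k * a k)
      atTop (𝓝 L) := by
  have hb : Tendsto (fun M : ℕ => (∑ k ∈ range (M + 1), (a k - L)) / M) atTop (𝓝 0) := by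
    have h := (ha.sub_const L).sub (tendsto_inv_atTop_nhds_zero_nat.const_mul L)
    rw [sub_self, mul_zero, sub_zero] at h
    refine h.congr' ((eventually_ne_atTop 0).mono fun M hM => ?_)
    have : (M : ℝ) ≠ 0 := Nat.cast_ne_zero.2 hM
    dsimp only
    rw [sum_sub_distrib, sum_const, card_range, nsmul_eq_mul]
    push_cast
    field_simp
    ring
  have h := (((hH.tendsto_sum_range_succ_div hρ hmono hnn).const_mul L).add
    (tendsto_sum_range_mul_div_of_tendsto_partialSum_div hmono (hnn 0) hb)).const_mul (1 + ρ)
  rw [add_zero, mul_left_comm, mul_inv_cancel₀ (by positivity), mul_one] at h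
  refine h.congr fun M => ?_
  simp only [mul_sub, sum_sub_distrib, ← sum_mul]
  ring

lemma tendsto_atTop_of_tendsto_div_natCast {m : ℕ → ℕ} {c : ℝ} (hc : 0 < c)
    (hm : Tendsto (fun n : ℕ => (m n : ℝ) / n) atTop (𝓝 c)) : Tendsto m atTop atTop := by
  rw [← tendsto_natCast_atTop_iff (R := ℝ)]
  refine (hm.pos_mul_atTop hc tendsto_natCast_atTop_atTop).congr' ?_
  filter_upwards [eventually_ne_atTop 0] with n hn
  exact div_mul_cancel₀ _ (Nat.cast_ne_zero.2 hn)

theorem stmt8_general (ρ c L : ℝ) (hρ : 0 < ρ) (hc : 0 < c)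
    (m : ℕ → ℕ) (hm : Tendsto (fun n : ℕ => (m n : ℝ) / n) atTop (𝓝 c))
    (a : ℕ → ℝ)
    (hcesaro : Tendsto (fun M : ℕ => (1 / (M:ℝ)) * ∑ k ∈ Finset.range (M + 1), a k)
      atTop (𝓝 L))
    (H : ℕ → ℝ) (hHmono : Monotone H) (hHnn : ∀ k, 0 ≤ H k)
    (hHrv : ∀ l : ℝ, 0 < l →
      Tendsto (fun n : ℕ => H ⌊l * n⌋₊ / H n) atTop (𝓝 (l ^ ρ))) :
    Tendsto (fun n : ℕ => (1 + ρ) / ((m n : ℝ) * H (m n)) *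
        ∑ k ∈ Finset.range (m n + 1), H k * a k) atTop (𝓝 L) :=
  (IsRegularlyVarying.tendsto_weighted_cesaro hHrv hρ.le hHmono hHnn hcesaro).comp
    (tendsto_atTop_of_tendsto_div_natCast hc hm)

/-- discrete analogue of Lemma 2.2: Cesàro convergence of a bounded
nonnegative sequence (a_k) transfers to weighted averages with increasing, regularly
varying weights H(k) of index ρ>0:
(1+ρ)/(m·H(m)) · Σ_{k=0}^{m(n)} H(k)·a_k → L when m(n) ∼ cn. -/
theorem stmt8 (ρ c L : ℝ) (hρ : 0 < ρ) (hc : 0 < c)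
    (m : ℕ → ℕ) (hm : Tendsto (fun n : ℕ => (m n : ℝ) / n) atTop (𝓝 c))
    (a : ℕ → ℝ) (hann : ∀ k, 0 ≤ a k) (habdd : ∃ M, ∀ k, a k ≤ M)
    (hcesaro : Tendsto (fun M : ℕ => (1 / (M:ℝ)) * ∑ k ∈ Finset.range (M + 1), a k)
      atTop (𝓝 L))
    (H : ℕ → ℝ) (hHmono : Monotone H) (hHnn : ∀ k, 0 ≤ H k)
    (hHrv : ∀ l : ℝ, 0 < l →
      Tendsto (fun n : ℕ => H ⌊l * n⌋₊ / H n) atTop (𝓝 (l ^ ρ))) :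
    Tendsto (fun n : ℕ => (1 + ρ) / ((m n : ℝ) * H (m n)) *
        ∑ k ∈ Finset.range (m n + 1), H k * a k) atTop (𝓝 L) :=
  stmt8_general ρ c L hρ hc m hm a hcesaro H hHmono hHnn hHrv
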